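/- arXiv:2412.01341 — 4 statements merged into one kernel-verified Lean document; each statement's English description precedes it below -/
import Mathlib

section
/- Let A0 be symmetric positive definite and K a matrix with A0·K symmetric. Then for every vector v, ⟨v, K⁺ v⟩_{A0} ≥ 0, where ⟨u,v⟩_{A0} = uᵀ A0 v, and ⟨v, K⁺ v⟩_{A0} = 0 implies K⁺ v = 0. -/
/-!
Write `K = P D P⁻¹` with `D` diagonal. Symmetry of `A₀ K` says exactly that `B = Pᵀ A₀ P` commutes
with `D`; then `B` commutes with every function of `D`, in particular with `S = √D⁺`, so
`A₀ K⁺ = (S P⁻¹)ᵀ B (S P⁻¹)` is positive semidefinite. For a positive semidefinite `M`,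
`vᵀ M v = 0` forces `M v = 0`, and `A₀` is invertible.
-/

open Matrix

/-- `Mp` is a positive part of `M`: for some diagonalization `M = P D P⁻¹`,
`Mp = P D⁺ P⁻¹` where `D⁺` replaces each diagonal entry by its positive part. -/
def Matrix.IsPosPartOf {m : ℕ} (M Mp : Matrix (Fin m) (Fin m) ℝ) : Prop :=
  ∃ P D : Matrix (Fin m) (Fin m) ℝ, IsUnit P ∧ D.IsDiag ∧
    M = P * D * P⁻¹ ∧ Mp = P * (Matrix.of fun i j => max (D i j) 0) * P⁻¹

namespace Matrix

variable {n R : Type*} [Fintype n] [DecidableEq n]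

theorem _root_.Commute.diagonal_comp [CommRing R] [IsDomain R] {B : Matrix n n R} {d : n → R}
    (h : Commute B (diagonal d)) (f : R → R) : Commute B (diagonal (f ∘ d)) := by
  ext i j
  have hij := congrFun₂ h.eq i j
  simp only [mul_diagonal, diagonal_mul, Function.comp_apply] at hij ⊢
  rcases eq_or_ne (B i j) 0 with hB | hB
  · simp [hB]
  · rw [mul_left_cancel₀ hB (hij.trans (mul_comm _ _)), mul_comm]

theorem commute_transpose_mul_mul_of_isSymm_mul_conj [CommRing R] {A P D : Matrix n n R}
    (hA : A.IsSymm) (hD : D.IsSymm) (hP : IsUnit P) (h : (A * (P * D * P⁻¹)).IsSymm) :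
    Commute (Pᵀ * A * P) D := by
  have hPP : P⁻¹ * P = 1 := nonsing_inv_mul P ((isUnit_iff_isUnit_det P).mp hP)
  have hBD : Pᵀ * A * P * D = Pᵀ * (A * (P * D * P⁻¹)) * P := by
    simp only [Matrix.mul_assoc, hPP, Matrix.mul_one]
  calc Pᵀ * A * P * D = (Pᵀ * A * P * D)ᵀ := by
        rw [hBD, transpose_mul, transpose_mul, h.eq, transpose_transpose, Matrix.mul_assoc]
    _ = D * (Pᵀ * A * P) := by
        simp only [transpose_mul, hA.eq, hD.eq, transpose_transpose, Matrix.mul_assoc]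

end Matrix

theorem Matrix.PosSemidef.mul_of_isPosPartOf {m : ℕ} {A K Kp : Matrix (Fin m) (Fin m) ℝ}
    (hA : A.PosSemidef) (hsym : (A * K).IsSymm) (hKp : K.IsPosPartOf Kp) :
    (A * Kp).PosSemidef := by
  obtain ⟨P, D, hP, hD, rfl, rfl⟩ := hKp
  obtain ⟨d, rfl⟩ : ∃ d, D = diagonal d := ⟨D.diag, hD.diagonal_diag.symm⟩
  set s : Fin m → ℝ := fun i => √(max (d i) 0)
  have hposPart : (of fun i j => max (diagonal d i j) 0) = diagonal s * diagonal s := by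
    rw [diagonal_mul_diagonal]
    ext i j
    rcases eq_or_ne i j with rfl | hij
    · simp [s, Real.mul_self_sqrt (le_max_right _ _)]
    · simp [hij]
  have hAsymm : A.IsSymm := by simpa [IsSymm, conjTranspose_eq_transpose_of_trivial] using hA.1
  have hcomm : Commute (Pᵀ * A * P) (diagonal s) :=
    (commute_transpose_mul_mul_of_isSymm_mul_conj hAsymm (isSymm_diagonal d) hP hsym).diagonal_comp
      fun x => √(max x 0)
  have hPP : P⁻¹ᵀ * Pᵀ = 1 := by
    rw [← transpose_mul, mul_nonsing_inv P ((isUnit_iff_isUnit_det P).mp hP), transpose_one]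
  have hconj : A * (P * (diagonal s * diagonal s) * P⁻¹)
      = (diagonal s * P⁻¹)ᴴ * (Pᴴ * A * P) * (diagonal s * P⁻¹) := by
    simp only [conjTranspose_eq_transpose_of_trivial, transpose_mul, diagonal_transpose]
    rw [Matrix.mul_assoc P⁻¹ᵀ (diagonal s), ← hcomm.eq]
    simp only [← Matrix.mul_assoc, hPP, Matrix.one_mul]
  rw [hposPart, hconj]
  exact (hA.conjTranspose_mul_mul_same P).conjTranspose_mul_mul_same _

theorem stmt1_general {m : ℕ} (A0 K Kp : Matrix (Fin m) (Fin m) ℝ)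
    (hA0pd : A0.PosDef) (hsym : (A0 * K).IsSymm)
    (hKp : K.IsPosPartOf Kp) :
    ∀ v : Fin m → ℝ,
      0 ≤ v ⬝ᵥ (A0 *ᵥ (Kp *ᵥ v)) ∧
      (v ⬝ᵥ (A0 *ᵥ (Kp *ᵥ v)) = 0 → Kp *ᵥ v = 0) := by
  have hM := hA0pd.posSemidef.mul_of_isPosPartOf hsym hKp
  intro v
  rw [mulVec_mulVec]
  refine ⟨by simpa using hM.dotProduct_mulVec_nonneg v, fun h0 => ?_⟩
  have hA0Kpv : A0 *ᵥ (Kp *ᵥ v) = 0 := by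
    rw [mulVec_mulVec]
    exact (hM.dotProduct_mulVec_zero_iff v).1 (by simpa using h0)
  exact mulVec_injective_of_isUnit hA0pd.isUnit (by rw [hA0Kpv, mulVec_zero])

theorem stmt1 {m : ℕ} (A0 K Kp : Matrix (Fin m) (Fin m) ℝ)
    (hA0sym : A0.IsSymm) (hA0pd : A0.PosDef) (hsym : (A0 * K).IsSymm)
    (hKp : K.IsPosPartOf Kp) :
    ∀ v : Fin m → ℝ,
      0 ≤ v ⬝ᵥ (A0 *ᵥ (Kp *ᵥ v)) ∧
      (v ⬝ᵥ (A0 *ᵥ (Kp *ᵥ v)) = 0 → Kp *ᵥ v = 0) :=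
  stmt1_general A0 K Kp hA0pd hsym hKp
end

section
/- Let A0 be symmetric positive definite, and let (K_P) be a finite family of matrices each symmetrizable by A0 (i.e., A0·K_P symmetric for all P). If the only vector v satisfying K_P⁺ v = 0 for all P is v = 0, then the matrix N⁻¹ = Σ_P K_P⁺ is invertible. -/
/-!
Write `M = P D P⁻¹` with `D` diagonal and put `G = Pᵀ A0 P`, a positive semidefinite matrix.
Symmetry of `A0 M` says that `G` commutes with `D`, hence with `√D⁺`, and therefore
`A0 M⁺ = Rᵀ A0 R` for `R = P √D⁺ P⁻¹`: each `A0 K_P⁺` is positive semidefinite.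
If `(∑ K_P⁺) v = 0`, then `∑ A0 K_P⁺` kills `v`, so every positive semidefinite summand does,
and invertibility of `A0` gives `K_P⁺ v = 0` for all `P`, hence `v = 0`.
-/

open Matrix

theorem Commute.diagonal_comp_s2 {n R : Type*} [Fintype n] [DecidableEq n] [CommRing R]
    [NoZeroDivisors R] {G : Matrix n n R} {d : n → R} (h : Commute G (diagonal d))
    (f : R → R) : Commute G (diagonal (f ∘ d)) := by
  ext i j
  have hij : G i j * d j = d i * G i j := by
    simpa only [mul_diagonal, diagonal_mul] using congrFun (congrFun h.eq i) j
  simp only [mul_diagonal, diagonal_mul, Function.comp_apply]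
  rcases eq_or_ne (G i j) 0 with hG | hG
  · simp [hG]
  · rw [mul_comm (d i)] at hij
    rw [mul_left_cancel₀ hG hij, mul_comm]

open scoped ComplexOrder in
theorem Matrix.PosSemidef.mulVec_eq_zero_of_sum_mulVec_eq_zero {ι n 𝕜 : Type*} [Fintype ι]
    [Fintype n] [RCLike 𝕜] {B : ι → Matrix n n 𝕜} (hB : ∀ i, (B i).PosSemidef)
    {v : n → 𝕜} (hv : (∑ i, B i) *ᵥ v = 0) (i : ι) : B i *ᵥ v = 0 := by
  have hsum : ∑ i, star v ⬝ᵥ B i *ᵥ v = 0 := by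
    rw [← dotProduct_sum, ← sum_mulVec, hv, dotProduct_zero]
  rw [← (hB i).dotProduct_mulVec_zero_iff]
  exact (Finset.sum_eq_zero_iff_of_nonneg fun j _ => (hB j).dotProduct_mulVec_nonneg v).1
    hsum i (Finset.mem_univ i)

theorem Matrix.IsPosPartOf.posSemidef_mul {m : ℕ} {A0 M Mp : Matrix (Fin m) (Fin m) ℝ}
    (hpos : M.IsPosPartOf Mp) (hA0 : A0.PosSemidef) (hsym : (A0 * M).IsSymm) :
    (A0 * Mp).PosSemidef := by
  obtain ⟨P, D, hP, hD, rfl, rfl⟩ := hpos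
  obtain ⟨d, rfl⟩ : ∃ d, D = diagonal d := ⟨D.diag, hD.diagonal_diag.symm⟩
  have hPdet := (isUnit_iff_isUnit_det P).1 hP
  set G := Pᵀ * A0 * P with hG
  have hA0symm : A0ᵀ = A0 := by
    rw [← conjTranspose_eq_transpose_of_trivial]
    exact hA0.isHermitian.eq
  have hGsymm : Gᵀ = G := by
    rw [hG, transpose_mul, transpose_mul, transpose_transpose, hA0symm, Matrix.mul_assoc]
  have hGd : Commute G (diagonal d) := by
    have hconj : G * diagonal d = Pᵀ * (A0 * (P * diagonal d * P⁻¹)) * P := by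
      simp only [hG, Matrix.mul_assoc, nonsing_inv_mul P hPdet, Matrix.mul_one]
    calc G * diagonal d = (G * diagonal d)ᵀ := by
          rw [hconj, transpose_mul, transpose_mul, transpose_transpose, hsym.eq, Matrix.mul_assoc]
      _ = diagonal d * G := by rw [transpose_mul, diagonal_transpose, hGsymm]
  set S := diagonal fun i => √(max (d i) 0)
  have hGS : Commute G S := hGd.diagonal_comp_s2 fun x => √(max x 0)
  have hSS : S * S = Matrix.of fun i j => max (diagonal d i j) 0 := by
    simp only [S, diagonal_mul_diagonal, Real.mul_self_sqrt (le_max_right _ _)]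
    exact (diagonal_map (f := fun x : ℝ => max x 0) (max_self 0)).symm
  have hPP : P⁻¹ᵀ * Pᵀ = 1 := by rw [← transpose_mul, mul_nonsing_inv P hPdet, transpose_one]
  have hsq : A0 * (P * (S * S) * P⁻¹) = (P * S * P⁻¹)ᴴ * A0 * (P * S * P⁻¹) := by
    rw [conjTranspose_eq_transpose_of_trivial]
    calc A0 * (P * (S * S) * P⁻¹) = P⁻¹ᵀ * (G * S) * S * P⁻¹ := by
          simp only [hG, ← Matrix.mul_assoc, hPP, Matrix.one_mul]
      _ = P⁻¹ᵀ * S * G * S * P⁻¹ := by rw [hGS.eq]; simp only [Matrix.mul_assoc]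
      _ = _ := by simp only [hG, transpose_mul, diagonal_transpose, Matrix.mul_assoc, S]
  rw [← hSS, hsq]
  exact hA0.conjTranspose_mul_mul_same _

theorem stmt2_general {m : ℕ} {ι : Type*} [Fintype ι]
    (A0 : Matrix (Fin m) (Fin m) ℝ) (hA0pd : A0.PosDef)
    (K Kp : ι → Matrix (Fin m) (Fin m) ℝ)
    (hsym : ∀ P, (A0 * K P).IsSymm)
    (hpos : ∀ P, (K P).IsPosPartOf (Kp P))
    (hker : ∀ v : Fin m → ℝ, (∀ P, Kp P *ᵥ v = 0) → v = 0) :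
    IsUnit (∑ P, Kp P) := by
  refine (isUnit_iff_isUnit_det _).2 (isUnit_iff_ne_zero.2 fun hdet => ?_)
  obtain ⟨v, hv, hv0⟩ := exists_mulVec_eq_zero_iff.2 hdet
  refine hv (hker v fun P => ?_)
  have hpsd : ∀ P, (A0 * Kp P).PosSemidef := fun P =>
    (hpos P).posSemidef_mul hA0pd.posSemidef (hsym P)
  have hsum : (∑ P, A0 * Kp P) *ᵥ v = 0 := by
    rw [← Finset.mul_sum, ← mulVec_mulVec, hv0, mulVec_zero]
  have hA0Kpv : A0 *ᵥ (Kp P *ᵥ v) = A0 *ᵥ 0 := by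
    rw [mulVec_mulVec, PosSemidef.mulVec_eq_zero_of_sum_mulVec_eq_zero hpsd hsum P, mulVec_zero]
  exact mulVec_injective_of_isUnit hA0pd.isUnit hA0Kpv

theorem stmt2 {m : ℕ} {ι : Type*} [Fintype ι]
    (A0 : Matrix (Fin m) (Fin m) ℝ) (hA0sym : A0.IsSymm) (hA0pd : A0.PosDef)
    (K Kp : ι → Matrix (Fin m) (Fin m) ℝ)
    (hsym : ∀ P, (A0 * K P).IsSymm)
    (hpos : ∀ P, (K P).IsPosPartOf (Kp P))
    (hker : ∀ v : Fin m → ℝ, (∀ P, Kp P *ᵥ v = 0) → v = 0) :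
    IsUnit (∑ P, Kp P) :=
  stmt2_general A0 hA0pd K Kp hsym hpos hker
end

section
/- The set D = {(ρ, m, E) ∈ ℝ × ℝᵈ × ℝ : ρ > 0 and E − ‖m‖²/(2ρ) > 0} equals the set {u = (ρ, m, E) : uᵀ n* > 0 for all n* ∈ N}, where N = {(1, 0_d, 0)} ∪ {(‖ν‖²/2, −ν, 1) : ν ∈ ℝᵈ}. -/
/-- GQL representation of the Euler invariant domain: positivity of density and
internal energy is equivalent to an infinite family of linear constraints. -/
theorem stmt3 (d : ℕ) :
    {u : ℝ × (Fin d → ℝ) × ℝ |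
      0 < u.1 ∧ 0 < u.2.2 - (∑ i, u.2.1 i ^ 2) / (2 * u.1)} =
    {u : ℝ × (Fin d → ℝ) × ℝ |
      ∀ n ∈ ({((1 : ℝ), (0 : Fin d → ℝ), (0 : ℝ))} ∪
          {n : ℝ × (Fin d → ℝ) × ℝ |
            ∃ ν : Fin d → ℝ, n = ((∑ i, ν i ^ 2) / 2, -ν, 1)} :
          Set (ℝ × (Fin d → ℝ) × ℝ)),
        0 < u.1 * n.1 + (∑ i, u.2.1 i * n.2.1 i) + u.2.2 * n.2.2} := by
  ext ⟨ρ, m, E⟩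
  simp only [Set.mem_setOf_eq, Set.mem_union, Set.mem_singleton_iff]
  constructor
  · rintro ⟨hρ, hE⟩ n hn
    rcases hn with rfl | ⟨ν, rfl⟩
    · simpa using hρ
    · simp only [Pi.neg_apply, mul_neg, mul_one]
      have hA : (0:ℝ) ≤ ∑ i, (ρ * ν i - m i)^2 :=
        Finset.sum_nonneg fun i _ => sq_nonneg _
      have hexp : ∑ i, (ρ * ν i - m i)^2 =
          ρ^2 * ∑ i, ν i ^2 - 2*ρ*∑ i, m i * ν i + ∑ i, m i ^2 := by
        rw [Finset.sum_congr rfl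
          (fun i (_ : i ∈ Finset.univ) =>
            (by ring : (ρ * ν i - m i)^2
              = ρ^2 * ν i ^2 - 2*ρ*(m i * ν i) + m i ^2)),
          Finset.sum_add_distrib, Finset.sum_sub_distrib,
          ← Finset.mul_sum, ← Finset.mul_sum]
      rw [hexp] at hA
      have hC : (∑ i, m i ^ 2) / (2 * ρ) < E := by linarith
      have hC2 : (∑ i, m i ^ 2) < 2 * ρ * E := by
        rw [div_lt_iff₀ (by positivity)] at hC; linarith
      rw [Finset.sum_neg_distrib]
      nlinarith [hA, hC2, hρ]
  · intro h
    have h1 := h ((1 : ℝ), (0 : Fin d → ℝ), (0 : ℝ)) (Or.inl rfl)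
    simp only [mul_one, Pi.zero_apply, mul_zero, Finset.sum_const_zero,
      add_zero] at h1
    refine ⟨h1, ?_⟩
    have h2 := h ((∑ i, (m i / ρ) ^ 2) / 2, -(fun i => m i / ρ), 1)
      (Or.inr ⟨fun i => m i / ρ, rfl⟩)
    simp only [Pi.neg_apply, mul_neg, mul_one] at h2
    have e1 : ∑ i, (m i / ρ) ^ 2 = (∑ i, m i ^ 2) / ρ ^ 2 := by
      rw [Finset.sum_div]; exact Finset.sum_congr rfl fun i _ => by rw [div_pow]
    have e2 : ∑ i, -(m i * (m i / ρ)) = -((∑ i, m i ^ 2) / ρ) := by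
      rw [Finset.sum_neg_distrib, Finset.sum_div]
      congr 1
      exact Finset.sum_congr rfl fun i _ => by rw [sq]; ring
    rw [e1, e2] at h2
    have hρ := h1
    have e3 : ρ * ((∑ i, m i ^ 2) / ρ ^ 2 / 2) - (∑ i, m i ^ 2) / ρ
        = -((∑ i, m i ^ 2) / (2 * ρ)) := by
      field_simp
      ring
    nlinarith [h2, e3]
end

section
/- Let B = [[β₀·Id_d, −b], [−bᵀ, 2β_{d+1}]] and C = [[α₀·Id_d, −a], [−aᵀ, 2α_{d+1}]] be (d+1)×(d+1) block matrices with a, b ∈ ℝᵈ, α₀ > 0, and C positive definite. Then every eigenvalue λ of C^{−1/2} B C^{−1/2} is either λ = β₀/α₀ or a root of the quadratic (‖a‖² − 2α₀α_{d+1})λ² + 2(β_{d+1}α₀ + β₀α_{d+1} − aᵀb)λ + (‖b‖² − 2β₀β_{d+1}) = 0. -/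
/-!
Writing `C = S * S` with `S = C^{1/2}`, an eigenvector `z` of `S⁻¹ B S⁻¹` gives `x = S⁻¹ z ≠ 0`
with `B x = λ C x`. Both matrices are arrowhead matrices, so with `x = (u, θ)` and `μ = β₀ - λ α₀`
the first `d` rows read `μ u = θ (b - λ a)`. Unless `μ = 0`, this forces `θ ≠ 0`, and substituting
`u` into the last row gives `‖b - λ a‖² = (2 β_{d+1} - 2 λ α_{d+1}) μ`, which expands to the quadratic.
-/

open Matrix

section

open scoped ComplexOrder

/-- The square root of a positive semidefinite matrix, as defined in Mathlib (Dec 2024). -/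
noncomputable def Matrix.PosSemidef.sqrt {n : Type*} [Fintype n] {𝕜 : Type*} [RCLike 𝕜]
    [DecidableEq n] {A : Matrix n n 𝕜} (hA : A.PosSemidef) : Matrix n n 𝕜 :=
  hA.1.eigenvectorUnitary.1 * diagonal ((↑) ∘ (√·) ∘ hA.1.eigenvalues) *
  (star hA.1.eigenvectorUnitary : Matrix n n 𝕜)

end

namespace Matrix

open scoped ComplexOrder in
theorem PosSemidef.sqrt_mul_self {n 𝕜 : Type*} [Fintype n] [RCLike 𝕜] [DecidableEq n]
    {A : Matrix n n 𝕜} (hA : A.PosSemidef) : hA.sqrt * hA.sqrt = A := by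
  have hU := Unitary.coe_star_mul_self hA.1.eigenvectorUnitary
  unfold Matrix.PosSemidef.sqrt
  conv_rhs => rw [hA.1.spectral_theorem, Unitary.conjStarAlgAut_apply]
  simp only [mul_assoc]
  rw [← mul_assoc (star hA.1.eigenvectorUnitary : Matrix n n 𝕜) _, hU, one_mul,
    ← mul_assoc (diagonal _), diagonal_mul_diagonal]
  congr 3
  funext i
  simp [← RCLike.ofReal_mul, Real.mul_self_sqrt (hA.eigenvalues_nonneg i)]

theorem exists_mulVec_eq_smul_mul_self_mulVec_of_inv_conj {R n : Type*} [CommRing R]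
    [Fintype n] [DecidableEq n] {S B : Matrix n n R} (hS : IsUnit S) {lam : R} {z : n → R}
    (hz : z ≠ 0) (h : (S⁻¹ * B * S⁻¹) *ᵥ z = lam • z) :
    ∃ x ≠ 0, B *ᵥ x = lam • ((S * S) *ᵥ x) := by
  have hSS : S * S⁻¹ = 1 := mul_nonsing_inv S ((isUnit_iff_isUnit_det S).1 hS)
  have hz' : S *ᵥ (S⁻¹ *ᵥ z) = z := by rw [mulVec_mulVec, hSS, one_mulVec]
  refine ⟨S⁻¹ *ᵥ z, fun h0 => hz (by rw [← hz', h0, mulVec_zero]), ?_⟩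
  calc B *ᵥ (S⁻¹ *ᵥ z) = S *ᵥ ((S⁻¹ * B * S⁻¹) *ᵥ z) := by
        simp only [mulVec_mulVec, ← mul_assoc, hSS, one_mul]
    _ = lam • ((S * S) *ᵥ (S⁻¹ *ᵥ z)) := by
        rw [h, mulVec_smul, ← mulVec_mulVec, hz']

section Arrowhead

variable {R ι : Type*} [CommRing R] [Fintype ι] [DecidableEq ι]

def arrowheadMatrix (c : R) (v : ι → R) (e : R) : Matrix (ι ⊕ Unit) (ι ⊕ Unit) R :=
  fromBlocks (c • 1) (of fun i _ => -v i) (of fun _ j => -v j) (of fun _ _ => e)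

theorem arrowheadMatrix_mulVec_inl (c : R) (v : ι → R) (e : R) (x : ι ⊕ Unit → R) (i : ι) :
    (arrowheadMatrix c v e *ᵥ x) (.inl i) = c * x (.inl i) - v i * x (.inr ()) := by
  simp [arrowheadMatrix, mulVec, dotProduct, Fintype.sum_sum_type, one_apply, sub_eq_add_neg]

theorem arrowheadMatrix_mulVec_inr (c : R) (v : ι → R) (e : R) (x : ι ⊕ Unit → R) :
    (arrowheadMatrix c v e *ᵥ x) (.inr ()) = e * x (.inr ()) - v ⬝ᵥ (x ∘ .inl) := by
  simp [arrowheadMatrix, mulVec, dotProduct, Fintype.sum_sum_type, sub_eq_add_neg, add_comm]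

end Arrowhead

theorem arrowheadMatrix_pencil_eigenvalue {K ι : Type*} [Field K] [Fintype ι] [DecidableEq ι]
    (a b : ι → K) (α₀ αd β₀ βd lam : K) {x : ι ⊕ Unit → K} (hx : x ≠ 0)
    (h : arrowheadMatrix β₀ b βd *ᵥ x = lam • (arrowheadMatrix α₀ a αd *ᵥ x)) :
    lam * α₀ = β₀ ∨
      (b - lam • a) ⬝ᵥ (b - lam • a) = (βd - lam * αd) * (β₀ - lam * α₀) := by
  set μ := β₀ - lam * α₀
  set θ := x (.inr ())
  set u := x ∘ .inl
  set w := b - lam • a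
  have hrows : μ • u = θ • w := funext fun i => by
    have := congrFun h (.inl i)
    simp only [arrowheadMatrix_mulVec_inl, Pi.smul_apply, smul_eq_mul] at this
    simp only [Pi.smul_apply, smul_eq_mul, Pi.sub_apply, w, u, μ, θ, Function.comp_apply]
    linear_combination this
  have hlast : w ⬝ᵥ u = (βd - lam * αd) * θ := by
    have := congrFun h (.inr ())
    simp only [arrowheadMatrix_mulVec_inr, Pi.smul_apply, smul_eq_mul] at this
    simp only [w, sub_dotProduct, smul_dotProduct, smul_eq_mul]
    linear_combination -this
  by_cases hμ : μ = 0
  · exact .inl (by linear_combination -hμ)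
  right
  have hθ : θ ≠ 0 := by
    intro hθ
    refine hx (funext fun k => ?_)
    rcases k with i | ⟨⟩
    · simpa [hθ, hμ, u] using congrFun hrows i
    · exact hθ
  apply mul_left_cancel₀ hθ
  calc θ * (w ⬝ᵥ w) = w ⬝ᵥ (μ • u) := by rw [hrows, dotProduct_smul, smul_eq_mul]
    _ = θ * ((βd - lam * αd) * μ) := by rw [dotProduct_smul, hlast, smul_eq_mul]; ring

end Matrix

/-- Every eigenvalue of `C^{-1/2} B C^{-1/2}` for the structured block matrices `B`, `C`
is either `β₀/α₀` or a root of an explicit quadratic. -/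
theorem stmt9 {d : ℕ} (a b : Fin d → ℝ) (α₀ αd β₀ βd : ℝ)
    (B C : Matrix (Fin d ⊕ Unit) (Fin d ⊕ Unit) ℝ)
    (hBdef : B = Matrix.fromBlocks (β₀ • (1 : Matrix (Fin d) (Fin d) ℝ))
      (Matrix.of fun i _ => -b i) (Matrix.of fun _ j => -b j)
      (Matrix.of fun _ _ => 2 * βd))
    (hCdef : C = Matrix.fromBlocks (α₀ • (1 : Matrix (Fin d) (Fin d) ℝ))
      (Matrix.of fun i _ => -a i) (Matrix.of fun _ j => -a j)
      (Matrix.of fun _ _ => 2 * αd))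
    (hα₀ : 0 < α₀) (hC : C.PosDef) :
    ∀ lam : ℝ,
      (∃ z : (Fin d ⊕ Unit) → ℝ, z ≠ 0 ∧
        (hC.posSemidef.sqrt⁻¹ * B * hC.posSemidef.sqrt⁻¹) *ᵥ z = lam • z) →
      lam = β₀ / α₀ ∨
        ((∑ i, a i ^ 2) - 2 * α₀ * αd) * lam ^ 2
          + 2 * (βd * α₀ + β₀ * αd - ∑ i, a i * b i) * lam
          + ((∑ i, b i ^ 2) - 2 * β₀ * βd) = 0 := by
  rintro lam ⟨z, hz, hzeig⟩
  have hsq := hC.posSemidef.sqrt_mul_self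
  have hS : IsUnit hC.posSemidef.sqrt := isUnit_of_mul_isUnit_left (hsq ▸ hC.isUnit)
  obtain ⟨x, hx, hBx⟩ := exists_mulVec_eq_smul_mul_self_mulVec_of_inv_conj hS hz hzeig
  rw [hsq, hBdef, hCdef] at hBx
  rcases arrowheadMatrix_pencil_eigenvalue a b α₀ (2 * αd) β₀ (2 * βd) lam hx hBx with h | h
  · exact .inl (by rw [eq_div_iff hα₀.ne', h])
  · right
    simp only [dotProduct, Pi.sub_apply, Pi.smul_apply, smul_eq_mul] at h
    have expand : ∑ i, (b i - lam * a i) * (b i - lam * a i)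
        = ∑ i, b i ^ 2 - 2 * lam * ∑ i, a i * b i + lam ^ 2 * ∑ i, a i ^ 2 := by
      simp only [Finset.mul_sum, ← Finset.sum_sub_distrib, ← Finset.sum_add_distrib]
      exact Finset.sum_congr rfl fun i _ => by ring
    linear_combination expand.symm.trans h
end
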